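/- Let φ : [0,∞) → ℝ⁺ be twice continuously differentiable with Δφ(r) = φ''(r) + φ'(r)/r for r > 0, and suppose Δφ(r) → ∞ as r → ∞ (equivalently, (Δφ)^{-1/2} tends to 0). Then lim_{r→∞} φ(r)/r² = ∞. -/

import Mathlib

open Filter

theorem stmt_0 (φ : ℝ → ℝ) (hφ : ContDiff ℝ 2 φ)
    (hpos : ∀ r : ℝ, 0 ≤ r → 0 < φ r)
    (hΔpos : ∀ r : ℝ, 0 < r → 0 < deriv (deriv φ) r + deriv φ r / r)
    (hΔ : Tendsto (fun r : ℝ => deriv (deriv φ) r + deriv φ r / r) atTop atTop) :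
    Tendsto (fun r : ℝ => φ r / r ^ 2) atTop atTop := by
  have hd1 : Differentiable ℝ φ := hφ.differentiable (by norm_num)
  have hd2 : Differentiable ℝ (deriv φ) := by
    have h2 : ContDiff ℝ ((1 : ℕ∞) + 1) φ := hφ.of_le (by norm_num)
    exact (contDiff_succ_iff_deriv.mp h2).2.2.differentiable (by norm_num)
  rw [tendsto_atTop]
  intro b
  set M : ℝ := 12 * max b 1 with hM
  have hMpos : 0 < M := by positivity
  clear_value M
  obtain ⟨R₀, hR₀⟩ := eventually_atTop.mp (hΔ.eventually_ge_atTop M)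
  set R : ℝ := max R₀ 1 with hRdef
  have hR1 : (1 : ℝ) ≤ R := le_max_right _ _
  have hRpos : 0 < R := lt_of_lt_of_le one_pos hR1
  have hRR0 : R₀ ≤ R := le_max_left _ _
  clear_value R
  set C₁ : ℝ := M / 2 * R ^ 2 - R * deriv φ R with hC₁
  clear_value C₁
  -- Step 2: r * φ' r - M/2 r² is monotone on [R, ∞)
  have hmono1 : MonotoneOn (fun r => r * deriv φ r - M / 2 * r ^ 2) (Set.Ici R) := by
    apply monotoneOn_of_deriv_nonneg (convex_Ici R)
    · exact ((continuous_id.mul hd2.continuous).sub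
        (continuous_const.mul (continuous_pow 2))).continuousOn
    · exact ((differentiable_id.mul hd2).sub
        ((differentiable_pow 2).const_mul _)).differentiableOn
    · intro x hx
      rw [interior_Ici] at hx
      have hxR : R < x := hx
      have hxpos : 0 < x := lt_trans hRpos hxR
      have hda : HasDerivAt (fun r => r * deriv φ r - M / 2 * r ^ 2)
          (deriv φ x + x * deriv (deriv φ) x - M * x) x := by
        have h1 : HasDerivAt (fun r : ℝ => r * deriv φ r)
            (1 * deriv φ x + x * deriv (deriv φ) x) x :=
          (hasDerivAt_id x).mul (hd2 x).hasDerivAt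
        have h2 : HasDerivAt (fun r : ℝ => M / 2 * r ^ 2) (M / 2 * (↑2 * x ^ 1)) x :=
          (hasDerivAt_pow 2 x).const_mul _
        have := h1.sub h2
        refine this.congr_deriv ?_
        push_cast
        ring
      rw [hda.deriv]
      have hMx : M ≤ deriv (deriv φ) x + deriv φ x / x :=
        hR₀ x (le_trans hRR0 hxR.le)
      have hx0 : x ≠ 0 := ne_of_gt hxpos
      have hexp : deriv φ x + x * deriv (deriv φ) x
          = x * (deriv (deriv φ) x + deriv φ x / x) := by
        field_simp
        ring
      rw [hexp]
      nlinarith [mul_le_mul_of_nonneg_left hMx hxpos.le]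
  have key1 : ∀ r, R ≤ r → M / 2 * r ^ 2 - C₁ ≤ r * deriv φ r := by
    intro r hr
    have := hmono1 Set.self_mem_Ici (Set.mem_Ici.mpr hr) hr
    simp only at this
    rw [hC₁]
    linarith
  -- Step 3: eventually φ' r ≥ M/3 * r
  set R₁ : ℝ := max R (6 * |C₁| / M) with hR₁def
  have hRR₁ : R ≤ R₁ := le_max_left _ _
  have hR₁1 : (1 : ℝ) ≤ R₁ := le_trans hR1 hRR₁
  have hR₁pos : 0 < R₁ := lt_of_lt_of_le one_pos hR₁1
  have hR₁abs : 6 * |C₁| / M ≤ R₁ := le_max_right _ _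
  clear_value R₁
  have key2 : ∀ r, R₁ ≤ r → M / 3 * r ≤ deriv φ r := by
    intro r hr
    have hrpos : 0 < r := lt_of_lt_of_le hR₁pos hr
    have h1 : M / 2 * r ^ 2 - C₁ ≤ r * deriv φ r := key1 r (le_trans hRR₁ hr)
    have h2 : 6 * |C₁| / M ≤ r := le_trans hR₁abs hr
    have h3 : 6 * |C₁| ≤ M * r := by
      rw [div_le_iff₀ hMpos] at h2
      linarith
    have h4 : C₁ ≤ |C₁| := le_abs_self _
    have h5 : C₁ * 6 ≤ M * r := by linarith
    have hr1 : (1 : ℝ) ≤ r := le_trans hR₁1 hr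
    have hrr : r ≤ r ^ 2 := by nlinarith
    have hMr2 : 6 * C₁ ≤ M * r ^ 2 := by
      have := mul_le_mul_of_nonneg_left hrr hMpos.le
      linarith
    have h6 : M / 3 * r * r ≤ r * deriv φ r := by
      have e : M / 3 * r * r = M / 2 * r ^ 2 - (M * r ^ 2) / 6 := by ring
      have e2 : M / 2 * r ^ 2 = (M * r ^ 2) / 2 := by ring
      rw [e]
      rw [e2] at h1
      linarith
    by_contra hcon
    push_neg at hcon
    have := mul_lt_mul_of_pos_left hcon hrpos
    nlinarith
  -- Step 4: φ r - M/6 r² monotone on [R₁, ∞)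
  set C₂ : ℝ := M / 6 * R₁ ^ 2 - φ R₁ with hC₂
  clear_value C₂
  have hmono2 : MonotoneOn (fun r => φ r - M / 6 * r ^ 2) (Set.Ici R₁) := by
    apply monotoneOn_of_deriv_nonneg (convex_Ici R₁)
    · exact (hd1.continuous.sub (continuous_const.mul (continuous_pow 2))).continuousOn
    · exact (hd1.sub ((differentiable_pow 2).const_mul _)).differentiableOn
    · intro x hx
      rw [interior_Ici] at hx
      have hda : HasDerivAt (fun r => φ r - M / 6 * r ^ 2)
          (deriv φ x - M / 3 * x) x := by
        have h1 : HasDerivAt φ (deriv φ x) x := (hd1 x).hasDerivAt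
        have h2 : HasDerivAt (fun r : ℝ => M / 6 * r ^ 2) (M / 6 * (↑2 * x ^ 1)) x :=
          (hasDerivAt_pow 2 x).const_mul _
        have := h1.sub h2
        refine this.congr_deriv ?_
        push_cast
        ring
      rw [hda.deriv]
      have := key2 x (le_of_lt hx)
      linarith
  have key3 : ∀ r, R₁ ≤ r → M / 6 * r ^ 2 - C₂ ≤ φ r := by
    intro r hr
    have := hmono2 Set.self_mem_Ici (Set.mem_Ici.mpr hr) hr
    simp only at this
    rw [hC₂]
    linarith
  -- Step 5: conclude
  set R₂ : ℝ := max R₁ (12 * |C₂| / M) with hR₂def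
  have hR₂₁ : R₁ ≤ R₂ := le_max_left _ _
  have hR₂abs : 12 * |C₂| / M ≤ R₂ := le_max_right _ _
  clear_value R₂
  refine eventually_atTop.mpr ⟨R₂, fun r hr => ?_⟩
  have hrR₁ : R₁ ≤ r := le_trans hR₂₁ hr
  have hrpos : 0 < r := lt_of_lt_of_le hR₁pos hrR₁
  have hr1 : (1 : ℝ) ≤ r := le_trans hR₁1 hrR₁
  have hr2pos : (0 : ℝ) < r ^ 2 := by positivity
  have h1 : M / 6 * r ^ 2 - C₂ ≤ φ r := key3 r hrR₁
  have h2 : 12 * |C₂| / M ≤ r := le_trans hR₂abs hr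
  have h3 : 12 * |C₂| ≤ M * r := by
    rw [div_le_iff₀ hMpos] at h2
    linarith
  have h4 : C₂ ≤ |C₂| := le_abs_self _
  have hrr : r ≤ r ^ 2 := by nlinarith
  have h5 : 12 * C₂ ≤ M * r ^ 2 := by
    have := mul_le_mul_of_nonneg_left hrr hMpos.le
    linarith
  have h6 : M / 12 * r ^ 2 ≤ φ r := by
    have e : M / 12 * r ^ 2 = (M * r ^ 2) / 12 := by ring
    have e2 : M / 6 * r ^ 2 = (M * r ^ 2) / 6 := by ring
    rw [e]
    rw [e2] at h1
    linarith
  have h7 : max b 1 ≤ φ r / r ^ 2 := by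
    rw [le_div_iff₀ hr2pos]
    have : max b 1 * r ^ 2 = M / 12 * r ^ 2 := by rw [hM]; ring
    rw [this]
    exact h6
  exact le_trans (le_max_left _ _) h7
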